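/- Given the iterative update in the convergence analysis: if P^{(m+1)} minimizes λ·tr(Pᵀ D^{(m)} P) - G(P) where D^{(m)} is the diagonal matrix with entries 1/(2‖P^{(m)}_{i·}‖₂) and all rows of P^{(m)}, P^{(m+1)} are nonzero, then λ‖P^{(m+1)}‖_{2,1} - G(P^{(m+1)}) ≤ λ‖P^{(m)}‖_{2,1} - G(P^{(m)}). -/

import Mathlib

open Matrix

lemma trace_diag_quad (d r : ℕ) (w : Fin d → ℝ) (Q : Matrix (Fin d) (Fin r) ℝ) :
    Matrix.trace (Qᵀ * Matrix.diagonal w * Q) = ∑ i, w i * ∑ j, (Q i j) ^ 2 := by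
  simp only [Matrix.trace, Matrix.diag, Matrix.mul_apply, Matrix.transpose_apply,
    Matrix.diagonal_apply, Finset.sum_mul]
  rw [Finset.sum_comm]
  congr 1
  ext i
  rw [Finset.mul_sum]
  congr 1
  ext j
  rw [Finset.sum_eq_single i]
  · simp only [if_true]; ring
  · intro k _ hk; simp [hk]
  · simp

lemma row_sum_sq_pos {d r : ℕ} (Q : Matrix (Fin d) (Fin r) ℝ) (i : Fin d)
    (h : Q i ≠ 0) : 0 < ∑ j, (Q i j) ^ 2 := by
  rcases Function.ne_iff.mp h with ⟨j, hj⟩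
  apply Finset.sum_pos' (fun k _ => sq_nonneg _)
  exact ⟨j, Finset.mem_univ j, lt_of_le_of_ne (sq_nonneg _) (Ne.symm (pow_ne_zero 2 hj))⟩

theorem stmt_15 (d r : ℕ) (lam : ℝ) (hlam : 0 < lam)
    (G : Matrix (Fin d) (Fin r) ℝ → ℝ)
    (P P' : Matrix (Fin d) (Fin r) ℝ)
    (hP : ∀ i, P i ≠ 0) (hP' : ∀ i, P' i ≠ 0)
    (D : Matrix (Fin d) (Fin d) ℝ)
    (hD : D = Matrix.diagonal (fun i => 1 / (2 * Real.sqrt (∑ j, (P i j) ^ 2))))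
    (hmin : lam * Matrix.trace (P'ᵀ * D * P') - G P' ≤
            lam * Matrix.trace (Pᵀ * D * P) - G P) :
    lam * (∑ i, Real.sqrt (∑ j, (P' i j) ^ 2)) - G P' ≤
      lam * (∑ i, Real.sqrt (∑ j, (P i j) ^ 2)) - G P := by
  set w : Fin d → ℝ := fun i => 1 / (2 * Real.sqrt (∑ j, (P i j) ^ 2)) with hw
  subst hD
  rw [trace_diag_quad, trace_diag_quad] at hmin
  have hspos : ∀ i, 0 < ∑ j, (P i j) ^ 2 := fun i => row_sum_sq_pos P i (hP i)
  have hs'pos : ∀ i, 0 < ∑ j, (P' i j) ^ 2 := fun i => row_sum_sq_pos P' i (hP' i)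
  -- key pointwise inequalities
  have key1 : ∀ i, Real.sqrt (∑ j, (P' i j) ^ 2) ≤
      w i * ∑ j, (P' i j) ^ 2 + Real.sqrt (∑ j, (P i j) ^ 2) / 2 := by
    intro i
    have hb : 0 < Real.sqrt (∑ j, (P i j) ^ 2) := Real.sqrt_pos.mpr (hspos i)
    have ha : 0 ≤ Real.sqrt (∑ j, (P' i j) ^ 2) := Real.sqrt_nonneg _
    have ha2 : (Real.sqrt (∑ j, (P' i j) ^ 2)) ^ 2 = ∑ j, (P' i j) ^ 2 :=
      Real.sq_sqrt (hs'pos i).le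
    rw [hw]
    have h2 : 0 < 2 * Real.sqrt (∑ j, (P i j) ^ 2) := by linarith
    rw [div_mul_eq_mul_div, one_mul]
    nth_rewrite 2 [← ha2]
    rw [div_add' _ _ _ h2.ne', le_div_iff₀ h2]
    nlinarith [sq_nonneg (Real.sqrt (∑ j, (P' i j) ^ 2) - Real.sqrt (∑ j, (P i j) ^ 2))]
  have key2 : ∀ i, w i * ∑ j, (P i j) ^ 2 = Real.sqrt (∑ j, (P i j) ^ 2) / 2 := by
    intro i
    have hb : 0 < Real.sqrt (∑ j, (P i j) ^ 2) := Real.sqrt_pos.mpr (hspos i)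
    have ha2 : (Real.sqrt (∑ j, (P i j) ^ 2)) ^ 2 = ∑ j, (P i j) ^ 2 :=
      Real.sq_sqrt (hspos i).le
    rw [hw, ← ha2]
    field_simp
    linear_combination (Real.sqrt_sq hb.le).symm
  have sum1 : ∑ i, Real.sqrt (∑ j, (P' i j) ^ 2) ≤
      (∑ i, w i * ∑ j, (P' i j) ^ 2) + (∑ i, Real.sqrt (∑ j, (P i j) ^ 2)) / 2 := by
    rw [Finset.sum_div, ← Finset.sum_add_distrib]
    exact Finset.sum_le_sum fun i _ => key1 i
  have sum2 : ∑ i, w i * ∑ j, (P i j) ^ 2 = (∑ i, Real.sqrt (∑ j, (P i j) ^ 2)) / 2 := by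
    rw [Finset.sum_div]
    exact Finset.sum_congr rfl fun i _ => key2 i
  rw [sum2] at hmin
  nlinarith [mul_le_mul_of_nonneg_left sum1 hlam.le]
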